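/- The FISTA iterates satisfy, for every k ≥ 0, (1/2)·‖x_k − x_*‖_v² ≤ (1/2)·‖x_0 − x_*‖_v². -/

import Mathlib

/-!
With `‖·‖_v` the weighted norm, one proximal-gradient step from `y` gives, for every `u`,
`F x⁺ + ½‖u - x⁺‖_v² ≤ F u + ½‖u - y‖_v²` (descent inequality, convexity of `f`, and the
three-point property of the prox of the convex `ψ`). Taking `u = (1 - θₖ) xₖ + θₖ x_*` and using
the choice of `θ`, the energy `(1 - θₖ)/θₖ² (F xₖ - F x_*) + ½‖zₖ - x_*‖_v²` is nonincreasing, so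
`‖zₖ - x_*‖_v ≤ ‖x₀ - x_*‖_v`. Since `xₖ₊₁ = (1 - θₖ) xₖ + θₖ zₖ₊₁` is a convex combination, every
`xₖ` stays in the convex `‖·‖_v`-ball around `x_*` through `x₀`.
-/

open scoped RealInnerProductSpace
open Set Filter Topology

theorem ConvexOn.add_inner_sub_le_of_hasGradientAt {E : Type*} [NormedAddCommGroup E]
    [InnerProductSpace ℝ E] [CompleteSpace E] {f : E → ℝ} (hf : ConvexOn ℝ univ f) {a x : E}
    (ha : HasGradientAt f a x) (u : E) :
    f x + ⟪a, u - x⟫ ≤ f u := by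
  have hconv : ConvexOn ℝ univ (f ∘ AffineMap.lineMap (k := ℝ) x u) := by
    simpa using hf.comp_affineMap (AffineMap.lineMap (k := ℝ) x u)
  have hderiv : HasDerivAt (f ∘ AffineMap.lineMap (k := ℝ) x u) ⟪a, u - x⟫ 0 := by
    have hfx : HasFDerivAt f (InnerProductSpace.toDual ℝ E a) (AffineMap.lineMap x u (0 : ℝ)) := by
      simpa using ha.hasFDerivAt
    simpa using hfx.comp_hasDerivAt (0 : ℝ) AffineMap.hasDerivAt_lineMap
  have := hconv.le_slope_of_hasDerivAt (mem_univ 0) (mem_univ 1) zero_lt_one hderiv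
  simp only [slope_def_field, Function.comp_apply, AffineMap.lineMap_apply_one,
    AffineMap.lineMap_apply_zero, sub_zero, div_one] at this
  linarith

section WeightedSqNorm

variable {ι : Type*} [Fintype ι] (v : ι → ℝ)

def weightedSqNorm (w : EuclideanSpace ℝ ι) : ℝ :=
  ∑ i, v i * w i ^ 2

theorem weightedSqNorm_nonneg {v : ι → ℝ} (hv : ∀ i, 0 ≤ v i) (w : EuclideanSpace ℝ ι) :
    0 ≤ weightedSqNorm v w :=
  Finset.sum_nonneg fun i _ => mul_nonneg (hv i) (sq_nonneg _)

theorem weightedSqNorm_smul (t : ℝ) (w : EuclideanSpace ℝ ι) :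
    weightedSqNorm v (t • w) = t ^ 2 * weightedSqNorm v w := by
  simp only [weightedSqNorm, Finset.mul_sum, PiLp.smul_apply, smul_eq_mul]
  exact Finset.sum_congr rfl fun i _ => by ring

theorem weightedSqNorm_sub_comm (a b : EuclideanSpace ℝ ι) :
    weightedSqNorm v (a - b) = weightedSqNorm v (b - a) := by
  simp only [weightedSqNorm, PiLp.sub_apply]
  exact Finset.sum_congr rfl fun i _ => by ring

theorem weightedSqNorm_sub_smul_add_smul (t : ℝ) (a b : EuclideanSpace ℝ ι) :
    weightedSqNorm v ((1 - t) • a + t • b)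
      = (1 - t) * weightedSqNorm v a + t * weightedSqNorm v b
        - t * (1 - t) * weightedSqNorm v (a - b) := by
  simp only [weightedSqNorm, Finset.mul_sum, ← Finset.sum_add_distrib, ← Finset.sum_sub_distrib,
    PiLp.add_apply, PiLp.sub_apply, PiLp.smul_apply, smul_eq_mul]
  exact Finset.sum_congr rfl fun i _ => by ring

theorem convexOn_weightedSqNorm_sub {v : ι → ℝ} (hv : ∀ i, 0 ≤ v i) (c : EuclideanSpace ℝ ι) :
    ConvexOn ℝ univ fun w => weightedSqNorm v (w - c) := by
  refine ⟨convex_univ, fun a _ b _ s t hs ht hst => ?_⟩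
  obtain rfl : s = 1 - t := by linarith
  have hsplit : (1 - t) • a + t • b - c = (1 - t) • (a - c) + t • (b - c) := by module
  dsimp only
  rw [hsplit, weightedSqNorm_sub_smul_add_smul, smul_eq_mul, smul_eq_mul]
  nlinarith [mul_nonneg (mul_nonneg ht hs) (weightedSqNorm_nonneg hv (a - c - (b - c)))]

/-- Along the segment from `p` to `u` the quadratic term loses `t (1 - t) ‖u - p‖_v²`; dividing
by `t` and letting `t → 0` gives the extra margin. -/
theorem add_weightedSqNorm_le_of_forall_le {φ : EuclideanSpace ℝ ι → ℝ} (hφ : ConvexOn ℝ univ φ)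
    {y p : EuclideanSpace ℝ ι}
    (hp : ∀ u, φ p + 1 / 2 * weightedSqNorm v (p - y) ≤ φ u + 1 / 2 * weightedSqNorm v (u - y))
    (u : EuclideanSpace ℝ ι) :
    φ p + 1 / 2 * weightedSqNorm v (p - y) + 1 / 2 * weightedSqNorm v (u - p)
      ≤ φ u + 1 / 2 * weightedSqNorm v (u - y) := by
  have hsegment : ∀ t ∈ Ioo (0 : ℝ) 1, (1 - t) * (1 / 2 * weightedSqNorm v (u - p))
      ≤ φ u + 1 / 2 * weightedSqNorm v (u - y) - (φ p + 1 / 2 * weightedSqNorm v (p - y)) := by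
    intro t ⟨ht0, ht1⟩
    have hφt := hφ.2 (mem_univ p) (mem_univ u) (sub_nonneg.2 ht1.le) ht0.le (sub_add_cancel 1 t)
    have hmin := hp ((1 - t) • p + t • u)
    have hsplit : (1 - t) • p + t • u - y = (1 - t) • (p - y) + t • (u - y) := by module
    rw [hsplit, weightedSqNorm_sub_smul_add_smul, sub_sub_sub_cancel_right,
      weightedSqNorm_sub_comm v p u] at hmin
    rw [smul_eq_mul, smul_eq_mul] at hφt
    refine le_of_mul_le_mul_left ?_ ht0
    nlinarith
  have hlim : Tendsto (fun t : ℝ => (1 - t) * (1 / 2 * weightedSqNorm v (u - p))) (𝓝[>] 0)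
      (𝓝 (1 / 2 * weightedSqNorm v (u - p))) := by
    have : Continuous fun t : ℝ => (1 - t) * (1 / 2 * weightedSqNorm v (u - p)) := by fun_prop
    simpa using (this.tendsto 0).mono_left nhdsWithin_le_nhds
  have := le_of_tendsto hlim (by filter_upwards [Ioo_mem_nhdsGT zero_lt_one] using hsegment)
  linarith

theorem add_weightedSqNorm_le_of_proxGrad {f ψ : EuclideanSpace ℝ ι → ℝ}
    (hf : ConvexOn ℝ univ f) (hψ : ConvexOn ℝ univ ψ) {a y p : EuclideanSpace ℝ ι}
    (ha : HasGradientAt f a y)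
    (hdesc : ∀ h, f (y + h) ≤ f y + ⟪a, h⟫ + 1 / 2 * weightedSqNorm v h)
    (hp : ∀ u, ⟪a, p - y⟫ + 1 / 2 * weightedSqNorm v (p - y) + ψ p
      ≤ ⟪a, u - y⟫ + 1 / 2 * weightedSqNorm v (u - y) + ψ u)
    (u : EuclideanSpace ℝ ι) :
    f p + ψ p + 1 / 2 * weightedSqNorm v (u - p)
      ≤ f u + ψ u + 1 / 2 * weightedSqNorm v (u - y) := by
  have hlin : ConvexOn ℝ univ fun w => ⟪a, w⟫ + ψ w := ((innerₛₗ ℝ a).convexOn convex_univ).add hψ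
  have hthree := add_weightedSqNorm_le_of_forall_le v hlin (y := y) (p := p)
    (fun w => by have := hp w; simp only [inner_sub_right] at this; linarith) u
  have hupper := hdesc (p - y)
  rw [add_sub_cancel] at hupper
  have hlower := hf.add_inner_sub_le_of_hasGradientAt ha u
  simp only [inner_sub_right] at hupper hlower
  linarith

end WeightedSqNorm

section Theta

/-- The positive root `s` of `s ^ 2 = t ^ 2 * (1 - s)`. -/
noncomputable def fistaTheta (t : ℝ) : ℝ :=
  (Real.sqrt (t ^ 4 + 4 * t ^ 2) - t ^ 2) / 2

variable {t : ℝ}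

theorem fistaTheta_sq (t : ℝ) : fistaTheta t ^ 2 = t ^ 2 * (1 - fistaTheta t) := by
  have hsqrt : Real.sqrt (t ^ 4 + 4 * t ^ 2) ^ 2 = t ^ 4 + 4 * t ^ 2 := Real.sq_sqrt (by positivity)
  unfold fistaTheta
  linear_combination hsqrt / 4

theorem fistaTheta_pos (ht : 0 < t) : 0 < fistaTheta t := by
  have : t ^ 2 < Real.sqrt (t ^ 4 + 4 * t ^ 2) :=
    Real.lt_sqrt_of_sq_lt (by nlinarith [pow_pos ht 2])
  unfold fistaTheta
  linarith

theorem fistaTheta_lt_one (ht : 0 < t) : fistaTheta t < 1 := by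
  have := fistaTheta_sq t
  nlinarith [pow_pos (fistaTheta_pos ht) 2, pow_pos ht 2]

end Theta

namespace Fista

theorem next_eq {E : Type*} [AddCommGroup E] [Module ℝ E] {θ : ℝ} (hθ : θ ≠ 0) {x z y x' z' : E}
    (hy : y = (1 - θ) • x + θ • z) (hz' : z' = z + θ⁻¹ • (x' - y)) :
    x' = (1 - θ) • x + θ • z' := by
  rw [hz', smul_add, smul_smul, mul_inv_cancel₀ hθ, one_smul, hy]
  abel

/-- Compare the step with `u = (1 - θ) x + θ c`, for which `u - y = θ (c - z)` and
`u - x' = θ (c - z')`. -/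
theorem lyapunov_step {ι : Type*} [Fintype ι] {v : ι → ℝ} {F : EuclideanSpace ℝ ι → ℝ}
    (hF : ConvexOn ℝ univ F) {θ : ℝ} (hθ0 : 0 < θ) (hθ1 : θ ≤ 1)
    {x z y x' z' c : EuclideanSpace ℝ ι} (hy : y = (1 - θ) • x + θ • z)
    (hx' : x' = (1 - θ) • x + θ • z')
    (hstep : ∀ u, F x' + 1 / 2 * weightedSqNorm v (u - x')
      ≤ F u + 1 / 2 * weightedSqNorm v (u - y)) :
    F x' - F c + θ ^ 2 * (1 / 2 * weightedSqNorm v (z' - c))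
      ≤ (1 - θ) * (F x - F c) + θ ^ 2 * (1 / 2 * weightedSqNorm v (z - c)) := by
  have hu := hstep ((1 - θ) • x + θ • c)
  have hy' : (1 - θ) • x + θ • c - y = θ • (c - z) := by rw [hy]; module
  have hx'' : (1 - θ) • x + θ • c - x' = θ • (c - z') := by rw [hx']; module
  rw [hy', hx'', weightedSqNorm_smul, weightedSqNorm_smul, weightedSqNorm_sub_comm v c,
    weightedSqNorm_sub_comm v c] at hu
  have hFu := hF.2 (mem_univ x) (mem_univ c) (sub_nonneg.2 hθ1) hθ0.le (sub_add_cancel 1 θ)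
  rw [smul_eq_mul, smul_eq_mul] at hFu
  linarith

theorem theta_pos {θ : ℕ → ℝ} (h0 : θ 0 = 1) (hrec : ∀ k, θ (k + 1) = fistaTheta (θ k)) :
    ∀ k, 0 < θ k
  | 0 => h0 ▸ one_pos
  | k + 1 => hrec k ▸ fistaTheta_pos (theta_pos h0 hrec k)

theorem theta_le_one {θ : ℕ → ℝ} (h0 : θ 0 = 1) (hrec : ∀ k, θ (k + 1) = fistaTheta (θ k)) :
    ∀ k, θ k ≤ 1
  | 0 => h0.le
  | k + 1 => hrec k ▸ (fistaTheta_lt_one (theta_pos h0 hrec k)).le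

/-- Telescoping `lyapunov_step`: the identity `θₖ₊₁² = θₖ² (1 - θₖ₊₁)` makes the weight
`(1 - θₖ₊₁) / θₖ₊₁²` of the next gap equal to `1 / θₖ²`. -/
theorem energy_le {θ a d : ℕ → ℝ} (h0 : θ 0 = 1) (hrec : ∀ k, θ (k + 1) = fistaTheta (θ k))
    (hstep : ∀ k, a (k + 1) + θ k ^ 2 * d (k + 1) ≤ (1 - θ k) * a k + θ k ^ 2 * d k) :
    ∀ k, (1 - θ k) / θ k ^ 2 * a k + d k ≤ d 0
  | 0 => by simp [h0]
  | k + 1 => by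
    have hθk : 0 < θ k ^ 2 := pow_pos (theta_pos h0 hrec k) 2
    have hweight : (1 - θ (k + 1)) / θ (k + 1) ^ 2 = 1 / θ k ^ 2 := by
      have hlt := fistaTheta_lt_one (theta_pos h0 hrec k)
      rw [hrec k, fistaTheta_sq, mul_comm, div_mul_eq_div_div, div_self (sub_pos.2 hlt).ne']
    have hdiv : 1 / θ k ^ 2 * a (k + 1) + d (k + 1) ≤ (1 - θ k) / θ k ^ 2 * a k + d k :=
      calc 1 / θ k ^ 2 * a (k + 1) + d (k + 1) = (a (k + 1) + θ k ^ 2 * d (k + 1)) / θ k ^ 2 := by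
            rw [add_div, mul_div_cancel_left₀ _ hθk.ne']; ring
        _ ≤ ((1 - θ k) * a k + θ k ^ 2 * d k) / θ k ^ 2 :=
            div_le_div_of_nonneg_right (hstep k) hθk.le
        _ = (1 - θ k) / θ k ^ 2 * a k + d k := by
            rw [add_div, mul_div_cancel_left₀ _ hθk.ne']; ring
    rw [hweight]
    exact hdiv.trans (energy_le h0 hrec hstep k)

end Fista

theorem Convex.mem_of_forall_eq_sub_smul_add_smul {E : Type*} [AddCommGroup E] [Module ℝ E]
    {s : Set E} (hs : Convex ℝ s) {x z : ℕ → E} {θ : ℕ → ℝ} (hθ0 : ∀ k, 0 ≤ θ k)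
    (hθ1 : ∀ k, θ k ≤ 1) (hx : ∀ k, x (k + 1) = (1 - θ k) • x k + θ k • z (k + 1))
    (hx0 : x 0 ∈ s) (hz : ∀ k, z (k + 1) ∈ s) : ∀ k, x k ∈ s
  | 0 => hx0
  | k + 1 => hx k ▸ hs (hs.mem_of_forall_eq_sub_smul_add_smul hθ0 hθ1 hx hx0 hz k) (hz k)
      (sub_nonneg.2 (hθ1 k)) (hθ0 k) (sub_add_cancel 1 (θ k))

theorem stmt_5_general {n : ℕ}
    (v : Fin n → ℝ) (hv : ∀ i, 0 < v i)
    (f ψ F : EuclideanSpace ℝ (Fin n) → ℝ)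
    (g : EuclideanSpace ℝ (Fin n) → EuclideanSpace ℝ (Fin n))
    (hfconv : ConvexOn ℝ Set.univ f)
    (hgrad : ∀ x, HasGradientAt f (g x) x)
    (hdesc : ∀ x h : EuclideanSpace ℝ (Fin n),
      f (x + h) ≤ f x + ⟪g x, h⟫ + (1 / 2) * ∑ i, v i * (h i) ^ 2)
    (hψconv : ConvexOn ℝ Set.univ ψ)
    (hF : ∀ x, F x = f x + ψ x)
    (xstar : EuclideanSpace ℝ (Fin n)) (hxstar : ∀ x, F xstar ≤ F x)
    (x y z : ℕ → EuclideanSpace ℝ (Fin n)) (θ : ℕ → ℝ)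
    (hθinit : θ 0 = 1) (hzinit : z 0 = x 0)
    (hy : ∀ k, y k = (1 - θ k) • x k + θ k • z k)
    (hxmin : ∀ k, ∀ u : EuclideanSpace ℝ (Fin n),
      ⟪g (y k), x (k + 1) - y k⟫ + (1 / 2) * (∑ i, v i * ((x (k + 1) - y k) i) ^ 2)
          + ψ (x (k + 1))
        ≤ ⟪g (y k), u - y k⟫ + (1 / 2) * (∑ i, v i * ((u - y k) i) ^ 2) + ψ u)
    (hz : ∀ k, z (k + 1) = z k + (θ k)⁻¹ • (x (k + 1) - y k))
    (hθrec : ∀ k : ℕ, θ (k + 1) = (Real.sqrt ((θ k) ^ 4 + 4 * (θ k) ^ 2) - (θ k) ^ 2) / 2)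
     :
    ∀ k : ℕ,
      (1 / 2) * ∑ i, v i * ((x k - xstar) i) ^ 2
        ≤ (1 / 2) * ∑ i, v i * ((x 0 - xstar) i) ^ 2 := by
  have hθpos := Fista.theta_pos hθinit hθrec
  have hθle := Fista.theta_le_one hθinit hθrec
  have hxrec : ∀ k, x (k + 1) = (1 - θ k) • x k + θ k • z (k + 1) :=
    fun k => Fista.next_eq (hθpos k).ne' (hy k) (hz k)
  have hstep : ∀ k u, F (x (k + 1)) + 1 / 2 * weightedSqNorm v (u - x (k + 1))
      ≤ F u + 1 / 2 * weightedSqNorm v (u - y k) := fun k u => by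
    simpa only [hF] using add_weightedSqNorm_le_of_proxGrad v hfconv hψconv (hgrad (y k))
      (hdesc (y k)) (hxmin k) u
  have hFconv : ConvexOn ℝ univ F := funext hF ▸ hfconv.add hψconv
  have hzle : ∀ k, weightedSqNorm v (z k - xstar) ≤ weightedSqNorm v (x 0 - xstar) := by
    intro k
    have henergy := Fista.energy_le (a := fun k => F (x k) - F xstar)
      (d := fun k => 1 / 2 * weightedSqNorm v (z k - xstar)) hθinit hθrec
      (fun k => Fista.lyapunov_step hFconv (hθpos k) (hθle k) (hy k) (hxrec k) (hstep k)) k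
    have hgap : 0 ≤ (1 - θ k) / θ k ^ 2 * (F (x k) - F xstar) :=
      mul_nonneg (div_nonneg (sub_nonneg.2 (hθle k)) (sq_nonneg _)) (sub_nonneg.2 (hxstar _))
    rw [hzinit] at henergy
    linarith
  have hball := (convexOn_weightedSqNorm_sub (fun i => (hv i).le) xstar).convex_le
    (weightedSqNorm v (x 0 - xstar))
  intro k
  have := hball.mem_of_forall_eq_sub_smul_add_smul (fun k => (hθpos k).le) hθle hxrec
    ⟨mem_univ _, le_rfl⟩ (fun k => ⟨mem_univ _, hzle (k + 1)⟩) k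
  exact mul_le_mul_of_nonneg_left this.2 (by norm_num)

theorem stmt_5 {n : ℕ} (hn : 1 ≤ n)
    (v : Fin n → ℝ) (hv : ∀ i, 0 < v i)
    (f ψ F : EuclideanSpace ℝ (Fin n) → ℝ)
    (g : EuclideanSpace ℝ (Fin n) → EuclideanSpace ℝ (Fin n))
    (hfconv : ConvexOn ℝ Set.univ f)
    (hgrad : ∀ x, HasGradientAt f (g x) x)
    (hdesc : ∀ x h : EuclideanSpace ℝ (Fin n),
      f (x + h) ≤ f x + ⟪g x, h⟫ + (1 / 2) * ∑ i, v i * (h i) ^ 2)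
    (hψconv : ConvexOn ℝ Set.univ ψ)
    (hF : ∀ x, F x = f x + ψ x)
    (xstar : EuclideanSpace ℝ (Fin n)) (hxstar : ∀ x, F xstar ≤ F x)
    (x y z : ℕ → EuclideanSpace ℝ (Fin n)) (θ : ℕ → ℝ)
    (hθinit : θ 0 = 1) (hzinit : z 0 = x 0)
    (hy : ∀ k, y k = (1 - θ k) • x k + θ k • z k)
    (hxmin : ∀ k, ∀ u : EuclideanSpace ℝ (Fin n),
      ⟪g (y k), x (k + 1) - y k⟫ + (1 / 2) * (∑ i, v i * ((x (k + 1) - y k) i) ^ 2)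
          + ψ (x (k + 1))
        ≤ ⟪g (y k), u - y k⟫ + (1 / 2) * (∑ i, v i * ((u - y k) i) ^ 2) + ψ u)
    (hz : ∀ k, z (k + 1) = z k + (θ k)⁻¹ • (x (k + 1) - y k))
    (hθrec : ∀ k : ℕ, θ (k + 1) = (Real.sqrt ((θ k) ^ 4 + 4 * (θ k) ^ 2) - (θ k) ^ 2) / 2)
     :
    ∀ k : ℕ,
      (1 / 2) * ∑ i, v i * ((x k - xstar) i) ^ 2
        ≤ (1 / 2) * ∑ i, v i * ((x 0 - xstar) i) ^ 2 :=
  stmt_5_general v hv f ψ F g hfconv hgrad hdesc hψconv hF xstar hxstar x y z θ hθinit hzinit hy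
    hxmin hz hθrec
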